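/- Let ρ : ℝ² → ℝ be twice continuously differentiable and let L₁₂₁, L₁₂₂ : ℝ² → ℝ be continuously differentiable functions satisfying at every point the two equations (E1) −e^{2ρ}∂₁∂₂ρ + 4L₁₂₁∂₂ρ − 4L₁₂₂∂₁ρ − 2∂₂L₁₂₁ + 2∂₁L₁₂₂ = 0 and (E2) 2L₁₂₁∂₂ρ + 2L₁₂₂∂₁ρ − ∂₂L₁₂₁ − ∂₁L₁₂₂ = 0. Then the function (x¹,x²) ↦ e^{−2ρ(x¹,x²)} L₁₂₂(x¹,x²) − (1/4) ∂₂ρ(x¹,x²) has vanishing partial derivative with respect to x¹ at every point of ℝ²; equivalently, e^{−2ρ} L₁₂₂ − (1/4) ∂₂ρ depends only on x². -/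

import Mathlib

/-!
Subtracting twice (E2) from (E1) eliminates `L₁₂₁` and leaves
`−e^{2ρ} ∂₁∂₂ρ − 8 L₁₂₂ ∂₁ρ + 4 ∂₁L₁₂₂ = 0`. Multiplied by `e^{−2ρ}/4`, this is exactly
`e^{−2ρ}(∂₁L₁₂₂ − 2 L₁₂₂ ∂₁ρ) − ¼ ∂₁∂₂ρ = 0`, which by the product and chain rules is
`∂₁(e^{−2ρ} L₁₂₂ − ¼ ∂₂ρ) = 0`.
-/

/-- Partial derivative of `f : ℝ² → ℝ` with respect to the `i`-th coordinate,
taken as the derivative along the corresponding coordinate line. -/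
noncomputable def pd (i : Fin 2) (f : (Fin 2 → ℝ) → ℝ) : (Fin 2 → ℝ) → ℝ :=
  fun x => deriv (fun t => f (Function.update x i t)) (x i)

section PartialDerivative

variable {f g : (Fin 2 → ℝ) → ℝ} {x : Fin 2 → ℝ}

theorem hasDerivAt_line_fderiv (hf : DifferentiableAt ℝ f x) (i : Fin 2) :
    HasDerivAt (fun t => f (Function.update x i t)) (fderiv ℝ f x (Pi.single i 1)) (x i) := by
  have hf' : HasFDerivAt f (fderiv ℝ f x) (Function.update x i (x i)) := by
    rw [Function.update_eq_self]
    exact hf.hasFDerivAt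
  exact hf'.comp_hasDerivAt (x i) (hasDerivAt_update x i (x i))

theorem pd_eq_fderiv (hf : DifferentiableAt ℝ f x) (i : Fin 2) :
    pd i f x = fderiv ℝ f x (Pi.single i 1) :=
  (hasDerivAt_line_fderiv hf i).deriv

theorem hasDerivAt_line_pd (hf : DifferentiableAt ℝ f x) (i : Fin 2) :
    HasDerivAt (fun t => f (Function.update x i t)) (pd i f x) (x i) :=
  pd_eq_fderiv hf i ▸ hasDerivAt_line_fderiv hf i

theorem contDiff_pd {n : WithTop ℕ∞} (hf : ContDiff ℝ (n + 1) f) (i : Fin 2) :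
    ContDiff ℝ n (pd i f) := by
  have hdiff : Differentiable ℝ f := hf.differentiable (by simp)
  rw [show pd i f = fun y => fderiv ℝ f y (Pi.single i 1) from
    funext fun y => pd_eq_fderiv (hdiff y) i]
  exact (hf.fderiv_right le_rfl).clm_apply contDiff_const

theorem pd_const_mul (c : ℝ) (i : Fin 2) :
    pd i (fun y => c * f y) x = c * pd i f x := by
  simp only [pd, deriv_const_mul_field']

theorem pd_neg (i : Fin 2) : pd i (fun y => -f y) x = -pd i f x :=
  deriv.neg (f := fun t => f (Function.update x i t))

theorem pd_sub (hf : DifferentiableAt ℝ f x) (hg : DifferentiableAt ℝ g x) (i : Fin 2) :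
    pd i (fun y => f y - g y) x = pd i f x - pd i g x :=
  ((hasDerivAt_line_pd hf i).sub (hasDerivAt_line_pd hg i)).deriv

theorem pd_mul (hf : DifferentiableAt ℝ f x) (hg : DifferentiableAt ℝ g x) (i : Fin 2) :
    pd i (fun y => f y * g y) x = pd i f x * g x + f x * pd i g x := by
  have h := (hasDerivAt_line_pd hf i).mul (hasDerivAt_line_pd hg i)
  rw [Function.update_eq_self] at h
  exact h.deriv

theorem pd_exp (hf : DifferentiableAt ℝ f x) (i : Fin 2) :
    pd i (fun y => Real.exp (f y)) x = Real.exp (f x) * pd i f x := by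
  have h := (hasDerivAt_line_pd hf i).exp
  rw [Function.update_eq_self] at h
  exact h.deriv

end PartialDerivative

/-- Coordinate `xⁱ` of the paper is index `i - 1 : Fin 2`. -/
theorem riemann_lanczos_2d_L122_profile_general
    (ρ L121 L122 : (Fin 2 → ℝ) → ℝ)
    (hρ : ContDiff ℝ 2 ρ) (hL122 : ContDiff ℝ 1 L122)
    (hE1 : ∀ x : Fin 2 → ℝ,
      -Real.exp (2 * ρ x) * pd 0 (pd 1 ρ) x + 4 * L121 x * pd 1 ρ x
        - 4 * L122 x * pd 0 ρ x - 2 * pd 1 L121 x + 2 * pd 0 L122 x = 0)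
    (hE2 : ∀ x : Fin 2 → ℝ,
      2 * L121 x * pd 1 ρ x + 2 * L122 x * pd 0 ρ x
        - pd 1 L121 x - pd 0 L122 x = 0) :
    ∀ x : Fin 2 → ℝ,
      pd 0 (fun y => Real.exp (-(2 * ρ y)) * L122 y - (1/4) * pd 1 ρ y) x = 0 := by
  intro x
  have hρ' : Differentiable ℝ ρ := hρ.differentiable two_ne_zero
  have hL122' : Differentiable ℝ L122 := hL122.differentiable one_ne_zero
  have hρ₁ : Differentiable ℝ (pd 1 ρ) := (contDiff_pd hρ 1).differentiable one_ne_zero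
  rw [pd_sub (f := fun y => Real.exp (-(2 * ρ y)) * L122 y) (by fun_prop) (by fun_prop),
    pd_mul (f := fun y => Real.exp (-(2 * ρ y))) (by fun_prop) (by fun_prop),
    pd_exp (by fun_prop), pd_neg, pd_const_mul, pd_const_mul]
  have hinv : Real.exp (-(2 * ρ x)) * Real.exp (2 * ρ x) = 1 := by
    rw [← Real.exp_add, neg_add_cancel, Real.exp_zero]
  linear_combination (Real.exp (-(2 * ρ x)) / 4) * (hE1 x - 2 * hE2 x)
    + (pd 0 (pd 1 ρ) x / 4) * hinv

/-- If `(L₁₂₁, L₁₂₂)` solves the 2-dimensional Riemann-Lanczos system (E1), (E2)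
(with the differential gauge condition) for a C² conformal factor `ρ`, then
`e^{−2ρ} L₁₂₂ − (1/4) ∂₂ρ` has vanishing `x¹`-partial derivative everywhere,
i.e. it depends only on `x²`.  Coordinate `xⁱ` corresponds to `i - 1 : Fin 2`. -/
theorem riemann_lanczos_2d_L122_profile
    (ρ L121 L122 : (Fin 2 → ℝ) → ℝ)
    (hρ : ContDiff ℝ 2 ρ) (hL121 : ContDiff ℝ 1 L121) (hL122 : ContDiff ℝ 1 L122)
    (hE1 : ∀ x : Fin 2 → ℝ,
      -Real.exp (2 * ρ x) * pd 0 (pd 1 ρ) x + 4 * L121 x * pd 1 ρ x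
        - 4 * L122 x * pd 0 ρ x - 2 * pd 1 L121 x + 2 * pd 0 L122 x = 0)
    (hE2 : ∀ x : Fin 2 → ℝ,
      2 * L121 x * pd 1 ρ x + 2 * L122 x * pd 0 ρ x
        - pd 1 L121 x - pd 0 L122 x = 0) :
    ∀ x : Fin 2 → ℝ,
      pd 0 (fun y => Real.exp (-(2 * ρ y)) * L122 y - (1/4) * pd 1 ρ y) x = 0 :=
  riemann_lanczos_2d_L122_profile_general ρ L121 L122 hρ hL122 hE1 hE2
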